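/- arXiv:1808.00072 — 2 statements merged into one kernel-verified Lean document; each statement's English description precedes it below -/
import Mathlib

section
/- Let X be a Tychonoff (completely regular Hausdorff) topological space and let I be an ideal in A(X), the set of nonzero ideals of C(X) with nonzero annihilator. Then the following are equivalent: (i) there exists J ∈ A(X) such that I·J ≠ {0} and no K ∈ A(X) satisfies both I·K = {0} and J·K = {0}; (ii) O(I) is not a singleton. (In graph terms, the eccentricity of the vertex I in the annihilating-ideal graph of C(X) equals 3 if and only if O(I) is not a singleton.) -/
open Set

lemma sep_fun {X : Type*} [TopologicalSpace X] [T35Space X] (p : X) (K : Set X)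
    (hK : IsClosed K) (hp : p ∉ K) :
    ∃ u : C(X, ℝ), u p = 1 ∧ (∀ x ∈ K, u x = 0) ∧ ∀ x, 0 ≤ u x ∧ u x ≤ 1 := by
  obtain ⟨f, hf, hf0, hf1⟩ := CompletelyRegularSpace.completely_regular p K hK hp
  refine ⟨⟨fun x => 1 - (f x : ℝ), by fun_prop⟩, ?_, ?_, ?_⟩
  · simp [hf0]
  · intro x hx; simp [hf1 hx]
  · intro x
    constructor
    · simp [(f x).2.2]
    · have := (f x).2.1; simp; linarith

lemma mul_eq_bot_iff' {X : Type*} [TopologicalSpace X] (I J : Ideal C(X, ℝ)) :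
    I * J = ⊥ ↔ ∀ f ∈ I, ∀ g ∈ J, f * g = 0 := by
  rw [eq_bot_iff, Ideal.mul_le]
  simp [Ideal.mem_bot]

lemma cm_mul_eq_zero {X : Type*} [TopologicalSpace X] (f g : C(X, ℝ)) :
    f * g = 0 ↔ ∀ x, f x * g x = 0 := by
  constructor
  · intro h x; have := congrFun (congrArg DFunLike.coe h) x; simpa using this
  · intro h; ext x; simpa using h x

lemma cm_ne_zero {X : Type*} [TopologicalSpace X] (f : C(X, ℝ)) :
    f ≠ 0 ↔ ∃ x, f x ≠ 0 := by
  rw [← not_forall]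
  constructor
  · intro h h'; exact h (by ext x; simpa using h' x)
  · intro h h'; exact h (fun x => by simp [h'])

/-- `cozUnion S` is `O(S)`: the union of the cozero sets of the members of `S ⊆ C(X, ℝ)`. -/
def cozUnion {X : Type*} [TopologicalSpace X] (S : Set C(X, ℝ)) : Set X :=
  ⋃ f ∈ S, {x : X | f x ≠ 0}

/-- `annIdeal I` is `Ann(I)`, the annihilator of the ideal `I` of `C(X, ℝ)`. -/
def annIdeal {X : Type*} [TopologicalSpace X] (I : Ideal C(X, ℝ)) : Ideal C(X, ℝ) where
  carrier := {g | ∀ f ∈ I, g * f = 0}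
  add_mem' := by
    intro a b ha hb f hf
    rw [add_mul, ha f hf, hb f hf, add_zero]
  zero_mem' := fun f _ => zero_mul f
  smul_mem' := by
    intro c g hg f hf
    rw [smul_eq_mul, mul_assoc, hg f hf, mul_zero]

lemma mem_annIdeal {X : Type*} [TopologicalSpace X] {I : Ideal C(X, ℝ)} {g : C(X, ℝ)} :
    g ∈ annIdeal I ↔ ∀ f ∈ I, g * f = 0 := Iff.rfl

/-- The annihilator of a single element, as an ideal. -/
def annElem {X : Type*} [TopologicalSpace X] (w : C(X, ℝ)) : Ideal C(X, ℝ) where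
  carrier := {g | g * w = 0}
  add_mem' := by
    intro a b ha hb
    simp only [Set.mem_setOf_eq] at *
    rw [add_mul, ha, hb, add_zero]
  zero_mem' := zero_mul w
  smul_mem' := by
    intro c g hg
    simp only [Set.mem_setOf_eq, smul_eq_mul] at *
    rw [mul_assoc, hg, mul_zero]

lemma mem_annElem {X : Type*} [TopologicalSpace X] {w g : C(X, ℝ)} :
    g ∈ annElem w ↔ g * w = 0 := Iff.rfl

/-- `annSet X` is `A(X)`: the set of nonzero ideals of `C(X, ℝ)` with nonzero annihilator. -/
def annSet (X : Type*) [TopologicalSpace X] : Set (Ideal C(X, ℝ)) :=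
  {I | I ≠ ⊥ ∧ annIdeal I ≠ ⊥}

lemma mem_cozUnion {X : Type*} [TopologicalSpace X] {I : Ideal C(X, ℝ)} {x : X} :
    x ∈ cozUnion ((I : Ideal C(X, ℝ)) : Set C(X, ℝ)) ↔ ∃ f ∈ I, f x ≠ 0 := by
  simp [cozUnion]

/-- For `I ∈ A(X)`, the eccentricity of the vertex `I` in the annihilating-ideal graph of
`C(X)` is `3` — i.e. there is `J ∈ A(X)` with `I·J ≠ {0}` having no common annihilating ideal
with `I` in `A(X)` — iff `O(I)` is not a singleton. -/
theorem ecc_three_iff_not_singleton {X : Type*} [TopologicalSpace X] [T35Space X]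
    (I : Ideal C(X, ℝ)) (hI : I ∈ annSet X) :
    (∃ J ∈ annSet X, I * J ≠ ⊥ ∧ ¬ ∃ K ∈ annSet X, I * K = ⊥ ∧ J * K = ⊥) ↔
      ¬ ∃ p : X, cozUnion ((I : Ideal C(X, ℝ)) : Set C(X, ℝ)) = {p} := by
  constructor
  · -- contrapositive: if O(I) = {p}, any J with I*J ≠ ⊥ has common annihilator K = annIdeal J
    rintro ⟨J, hJ, hIJ, hno⟩ ⟨p, hp⟩
    apply hno
    refine ⟨annIdeal J, ⟨hJ.2, ?_⟩, ?_, ?_⟩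
    · -- annIdeal (annIdeal J) ≠ ⊥ : it contains J ≠ ⊥
      obtain ⟨g, hgJ, hg⟩ := (Submodule.ne_bot_iff J).mp hJ.1
      refine fun h => hg ?_
      have : g ∈ annIdeal (annIdeal J) := by
        intro h hh
        rw [mul_comm]
        exact hh g hgJ
      rw [h] at this
      simpa using this
    · -- I * annIdeal J = ⊥
      -- first: O(J) at p is nonzero: ∃ g₀ ∈ J, g₀ p ≠ 0
      obtain ⟨y, f₀, hf₀I, g₀, hg₀J, hfg⟩ : ∃ y, ∃ f₀ ∈ I, ∃ g₀ ∈ J, f₀ y * g₀ y ≠ 0 := by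
        by_contra h
        push_neg at h
        apply hIJ
        rw [mul_eq_bot_iff']
        intro f hf g hg
        rw [cm_mul_eq_zero]
        intro x
        exact h x f hf g hg
      have hyp : y = p := by
        have : y ∈ cozUnion ((I : Ideal C(X, ℝ)) : Set C(X, ℝ)) :=
          mem_cozUnion.mpr ⟨f₀, hf₀I, fun h => hfg (by rw [h, zero_mul])⟩
        rw [hp] at this; exact this
      have hg₀p : g₀ p ≠ 0 := fun h => hfg (by rw [hyp, h, mul_zero])
      rw [mul_eq_bot_iff']
      intro f hf h hh
      rw [cm_mul_eq_zero]
      intro x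
      by_cases hx : f x = 0
      · rw [hx, zero_mul]
      · have hxp : x = p := by
          have : x ∈ cozUnion ((I : Ideal C(X, ℝ)) : Set C(X, ℝ)) :=
            mem_cozUnion.mpr ⟨f, hf, hx⟩
          rw [hp] at this; exact this
        have : h * g₀ = 0 := hh g₀ hg₀J
        have hp0 : h p * g₀ p = 0 := (cm_mul_eq_zero _ _).mp this p
        have : h p = 0 := by
          rcases mul_eq_zero.mp hp0 with h1 | h1
          · exact h1
          · exact absurd h1 hg₀p
        rw [hxp, this, mul_zero]
    · -- J * annIdeal J = ⊥
      rw [mul_eq_bot_iff']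
      intro g hg h hh
      rw [mul_comm]
      exact hh g hg
  · -- construction direction
    intro hns
    -- get p ∈ O(I)
    obtain ⟨f₁, hf₁I, hf₁⟩ := (Submodule.ne_bot_iff I).mp hI.1
    obtain ⟨p, hf₁p⟩ := (cm_ne_zero f₁).mp hf₁
    -- get q ∈ O(I), q ≠ p
    obtain ⟨q, hq, hqp⟩ : ∃ q, q ∈ cozUnion ((I : Ideal C(X, ℝ)) : Set C(X, ℝ)) ∧ q ≠ p := by
      by_contra h
      push_neg at h
      apply hns
      refine ⟨p, Set.eq_singleton_iff_unique_mem.mpr ⟨mem_cozUnion.mpr ⟨f₁, hf₁I, hf₁p⟩, ?_⟩⟩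
      intro x hx; exact h x hx
    obtain ⟨f₂, hf₂I, hf₂q⟩ := mem_cozUnion.mp hq
    -- separating function u : u p = 1, u q = 0, 0 ≤ u ≤ 1
    obtain ⟨u, hup, huq, hubd⟩ := sep_fun p {q} isClosed_singleton (by simpa using (Ne.symm hqp))
    -- w = max (u - 1/2) 0
    set w : C(X, ℝ) := ⟨fun x => max (u x - 1/2) 0, by fun_prop⟩ with hw
    have hwp : w p = 1/2 := by simp [hw, hup]; norm_num
    have hwcoz : ∀ x, w x ≠ 0 → (1:ℝ)/2 ≤ u x := by
      intro x hx
      by_contra h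
      push_neg at h
      apply hx
      simp only [hw, ContinuousMap.coe_mk]
      exact max_eq_right (by linarith)
    set w' : C(X, ℝ) := w * f₁ with hw'
    have hw'p : w' p ≠ 0 := by
      simp only [hw', ContinuousMap.mul_apply, hwp]
      intro h
      rcases mul_eq_zero.mp h with h1 | h1
      · norm_num at h1
      · exact hf₁p h1
    set J : Ideal C(X, ℝ) := annElem w' with hJdef
    -- v : v q = 1, v = 0 on closed set {x | 1/2 ≤ u x}
    have hCclosed : IsClosed {x : X | (1:ℝ)/2 ≤ u x} := by
      have : Continuous u := u.continuous
      exact isClosed_le continuous_const this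
    have hqC : q ∉ {x : X | (1:ℝ)/2 ≤ u x} := by
      simp [huq q rfl]
    obtain ⟨v, hvq, hvC, _⟩ := sep_fun q _ hCclosed hqC
    have hvJ : v ∈ J := by
      rw [hJdef, mem_annElem, cm_mul_eq_zero]
      intro x
      by_cases hx : w x = 0
      · simp [hw', hx]
      · have := hwcoz x hx
        rw [hvC x this, zero_mul]
    refine ⟨J, ⟨?_, ?_⟩, ?_, ?_⟩
    · -- J ≠ ⊥
      exact (Submodule.ne_bot_iff _).mpr ⟨v, hvJ, (cm_ne_zero v).mpr ⟨q, by rw [hvq]; norm_num⟩⟩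
    · -- annIdeal J ≠ ⊥ : contains w'
      refine (Submodule.ne_bot_iff _).mpr ⟨w', ?_, (cm_ne_zero w').mpr ⟨p, hw'p⟩⟩
      intro g hg
      rw [mul_comm]
      exact mem_annElem.mp hg
    · -- I * J ≠ ⊥
      intro h
      have : f₂ * v = 0 := (mul_eq_bot_iff' _ _).mp h f₂ hf₂I v hvJ
      have := (cm_mul_eq_zero _ _).mp this q
      rw [hvq] at this
      simp at this
      exact hf₂q this
    · -- no common annihilator
      rintro ⟨K, hK, hIK, hJK⟩
      obtain ⟨h, hhK, hh⟩ := (Submodule.ne_bot_iff K).mp hK.1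
      obtain ⟨x₀, hx₀⟩ := (cm_ne_zero h).mp hh
      -- Coz h is open; its complement is closed, contains Coz w', misses x₀
      have hcozh : IsClosed {x : X | h x = 0} := isClosed_eq h.continuous continuous_const
      have hx₀mem : x₀ ∉ {x : X | h x = 0} := hx₀
      have hsub : ∀ x, w' x ≠ 0 → h x = 0 := by
        intro x hx
        have : f₁ * h = 0 := (mul_eq_bot_iff' _ _).mp hIK f₁ hf₁I h hhK
        have hfh := (cm_mul_eq_zero _ _).mp this x
        have hf₁x : f₁ x ≠ 0 := by
          intro h1
          apply hx
          simp [hw', h1]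
        rcases mul_eq_zero.mp hfh with h1 | h1
        · exact absurd h1 hf₁x
        · exact h1
      obtain ⟨g, hgx₀, hgC, _⟩ := sep_fun x₀ _ hcozh hx₀mem
      have hgJ : g ∈ J := by
        rw [hJdef, mem_annElem, cm_mul_eq_zero]
        intro x
        by_cases hx : w' x = 0
        · rw [hx, mul_zero]
        · rw [hgC x (hsub x hx), zero_mul]
      have : g * h = 0 := (mul_eq_bot_iff' _ _).mp hJK g hgJ h hhK
      have := (cm_mul_eq_zero _ _).mp this x₀
      rw [hgx₀, one_mul] at this
      exact hx₀ this
end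

section
/- Let X be a Tychonoff (completely regular Hausdorff) topological space with more than two points. Then the girth of the annihilating-ideal graph of C(X) is 3; in particular, there exist pairwise distinct ideals I, J, K ∈ A(X) with I·J = {0}, J·K = {0}, and I·K = {0}. -/
open Set

/-- The annihilating-ideal graph of `C(X, ℝ)`: vertices are the ideals in `A(X)`, and two
distinct vertices `I`, `J` are adjacent exactly when `I·J = {0}`. -/
def annGraph (X : Type*) [TopologicalSpace X] : SimpleGraph (annSet X) where
  Adj I J := I ≠ J ∧ (I : Ideal C(X, ℝ)) * (J : Ideal C(X, ℝ)) = ⊥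
  symm := by
    constructor
    intro I J h
    exact ⟨h.1.symm, by rw [mul_comm]; exact h.2⟩
  loopless := ⟨fun I h => h.1 rfl⟩

/-! Three distinct points of `X` have pairwise disjoint open neighbourhoods, and complete
regularity gives functions equal to `1` at these points and supported in the neighbourhoods, so
their pairwise products vanish. The principal ideals they generate lie in `A(X)`, each being
annihilated by another, and are pairwise distinct because `C(X)` is reduced: `f ∈ (g)` together
with `f * g = 0` forces `f ^ 2 = 0`. They form a triangle, so the girth is `3`. -/

instance ContinuousMap.instIsReduced {X R : Type*} [TopologicalSpace X] [TopologicalSpace R]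
    [CommRing R] [IsTopologicalRing R] [IsReduced R] : IsReduced C(X, R) :=
  isReduced_of_injective (ContinuousMap.coeFnRingHom : C(X, R) →+* X → R) DFunLike.coe_injective

namespace SimpleGraph

theorem girth_eq_three_of_adj {α : Type*} {G : SimpleGraph α} {a b c : α}
    (hab : G.Adj a b) (hac : G.Adj a c) (hbc : G.Adj b c) : G.girth = 3 := by
  classical
  obtain ⟨u, w, hw, hlen⟩ := G.is3Clique_iff_exists_cycle_length_three.mp
    ⟨_, is3Clique_triple_iff.mpr ⟨hab, hac, hbc⟩⟩
  exact le_antisymm (hlen ▸ girth_le_length hw) (three_le_girth fun hG => hG w hw)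

end SimpleGraph

theorem Ideal.span_singleton_ne_of_mul_eq_zero {R : Type*} [CommRing R] [IsReduced R] {f g : R}
    (hf : f ≠ 0) (hfg : f * g = 0) : Ideal.span {f} ≠ Ideal.span {g} := by
  intro h
  obtain ⟨q, rfl⟩ := Ideal.mem_span_singleton'.mp (h ▸ Ideal.mem_span_singleton_self f)
  refine hf (IsReduced.eq_zero _ ⟨2, ?_⟩)
  calc (q * g) ^ 2 = q * (q * g * g) := by ring
    _ = 0 := by rw [hfg, mul_zero]

theorem exists_continuousMap_one_support_subset {X : Type*} [TopologicalSpace X]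
    [CompletelyRegularSpace X] {x : X} {U : Set X} (hU : IsOpen U) (hx : x ∈ U) :
    ∃ f : C(X, ℝ), f x = 1 ∧ Function.support f ⊆ U := by
  obtain ⟨f, hf, hfx, hfU⟩ := CompletelyRegularSpace.completely_regular_isOpen x U hU hx
  refine ⟨⟨fun y => 1 - (f y : ℝ), by fun_prop⟩, by simp [hfx], fun y hy => ?_⟩
  by_contra hyU
  exact hy (by simp [hfU hyU])

theorem ContinuousMap.mul_eq_zero_of_disjoint_support {X R : Type*} [TopologicalSpace X]
    [TopologicalSpace R] [MulZeroClass R] [ContinuousMul R] {f g : C(X, R)} (h : Disjoint (Function.support f) (Function.support g)) : f * g = 0 := by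
  ext x
  simp only [ContinuousMap.mul_apply, ContinuousMap.zero_apply]
  by_contra hx
  exact Set.disjoint_left.mp h (left_ne_zero_of_mul hx) (right_ne_zero_of_mul hx)

theorem Set.Finite.exists_continuousMap_pairwise_mul_eq_zero {X : Type*} [TopologicalSpace X]
    [T35Space X] {s : Set X} (hs : s.Finite) :
    ∃ f : X → C(X, ℝ), (∀ x, f x x = 1) ∧ s.Pairwise fun x y => f x * f y = 0 := by
  obtain ⟨U, hU, hdisj⟩ := hs.t2_separation
  choose f hf_one hf_supp using fun x => exists_continuousMap_one_support_subset (hU x).2 (hU x).1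
  exact ⟨f, hf_one, fun x hx y hy hxy => ContinuousMap.mul_eq_zero_of_disjoint_support <|
    (hdisj hx hy hxy).mono (hf_supp x) (hf_supp y)⟩

section AnnihilatingIdealGraph

variable {X : Type*} [TopologicalSpace X]

theorem mem_annIdeal_span_singleton {f g : C(X, ℝ)} :
    g ∈ annIdeal (Ideal.span {f}) ↔ g * f = 0 := by
  refine ⟨fun h => h f (Ideal.mem_span_singleton_self f), fun h p hp => ?_⟩
  obtain ⟨q, rfl⟩ := Ideal.mem_span_singleton'.mp hp
  rw [mul_left_comm, h, mul_zero]

theorem span_singleton_mem_annSet {f g : C(X, ℝ)} (hf : f ≠ 0) (hg : g ≠ 0) (hgf : g * f = 0) :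
    Ideal.span {f} ∈ annSet X :=
  ⟨Ideal.span_singleton_eq_bot.not.mpr hf, fun h =>
    hg <| (Submodule.eq_bot_iff _).mp h g (mem_annIdeal_span_singleton.mpr hgf)⟩

theorem annGraph_adj_span_singleton {f g : C(X, ℝ)} (hf : Ideal.span {f} ∈ annSet X)
    (hg : Ideal.span {g} ∈ annSet X) (hfg : f * g = 0) :
    (annGraph X).Adj ⟨_, hf⟩ ⟨_, hg⟩ :=
  ⟨Subtype.coe_ne_coe.mp <| Ideal.span_singleton_ne_of_mul_eq_zero
      (fun h => hf.1 (Ideal.span_singleton_eq_bot.mpr h)) hfg,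
    by rw [Ideal.span_singleton_mul_span_singleton, hfg, Ideal.span_singleton_eq_bot]⟩

end AnnihilatingIdealGraph

/-- If a Tychonoff space `X` has more than two points, then the girth of the
annihilating-ideal graph of `C(X)` is `3`; in particular there are pairwise distinct ideals
`I, J, K ∈ A(X)` with `I·J = J·K = I·K = {0}`. -/
theorem girth_eq_three {X : Type*} [TopologicalSpace X] [T35Space X]
    (h : ∃ a b c : X, a ≠ b ∧ a ≠ c ∧ b ≠ c) :
    (annGraph X).girth = 3 ∧
      ∃ I J K : Ideal C(X, ℝ), I ∈ annSet X ∧ J ∈ annSet X ∧ K ∈ annSet X ∧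
        I ≠ J ∧ J ≠ K ∧ I ≠ K ∧ I * J = ⊥ ∧ J * K = ⊥ ∧ I * K = ⊥ := by
  obtain ⟨a, b, c, hab, hac, hbc⟩ := h
  obtain ⟨f, hf_one, hf_mul⟩ :=
    (Set.toFinite {a, b, c}).exists_continuousMap_pairwise_mul_eq_zero
  have hf : ∀ x, f x ≠ 0 := fun x h0 => by simpa [h0] using hf_one x
  have hfab : f a * f b = 0 := hf_mul (by simp) (by simp) hab
  have hfac : f a * f c = 0 := hf_mul (by simp) (by simp) hac
  have hfbc : f b * f c = 0 := hf_mul (by simp) (by simp) hbc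
  have hI := span_singleton_mem_annSet (hf a) (hf b) (by rwa [mul_comm])
  have hJ := span_singleton_mem_annSet (hf b) (hf a) hfab
  have hK := span_singleton_mem_annSet (hf c) (hf a) hfac
  have hIJ := annGraph_adj_span_singleton hI hJ hfab
  have hIK := annGraph_adj_span_singleton hI hK hfac
  have hJK := annGraph_adj_span_singleton hJ hK hfbc
  exact ⟨SimpleGraph.girth_eq_three_of_adj hIJ hIK hJK, _, _, _, hI, hJ, hK,
    Subtype.coe_ne_coe.mpr hIJ.ne, Subtype.coe_ne_coe.mpr hJK.ne, Subtype.coe_ne_coe.mpr hIK.ne,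
    hIJ.2, hJK.2, hIK.2⟩
end
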